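/- Let C be a Hom-finite, Krull-Schmidt, k-linear triangulated category with a Serre functor S, and let U and M be indecomposable objects of C. The following are equivalent: (1) s^U is a composition factor of Hom_C(-,M); (2) there is a non-zero morphism U → M; (3) there is a non-zero morphism S^{-1}(M) → U; (4) s^{S^{-1}(M)} is a composition factor of Hom_C(-,U). -/

import Mathlib

/-!
If `f : U ⟶ M` is nonzero, then `f ∘ -` maps `Hom(-, U)` onto a subfunctor of `Hom(-, M)`, and
since its kernel lies in the radical, the quotient by the image of `Rad(-, U)` is `s^U`.
Conversely, if `Hom(U, M) = 0` then every subfunctor of `Hom(-, M)` vanishes at `U`, so it admits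
no nonzero morphism to `s^U`: the endomorphism ring of `U` is local, so `[𝟙 U] ≠ 0` in `s^U(U)`.
Serre duality `D Hom(S⁻¹M, U) ≅ Hom(U, M)` gives the middle equivalence, and `S⁻¹M`, being
indecomposable, again has a local endomorphism ring by the Krull–Schmidt property.
-/


namespace GradedCenter

open CategoryTheory CategoryTheory.Limits CategoryTheory.Pretriangulated Opposite

universe v u

section BasicDefs

variable {C : Type u} [Category.{v} C]

/-- An object of a category with zero morphisms is *indecomposable* if it is nonzero and
its only idempotent endomorphisms are `0` and the identity. -/
def Indec [HasZeroMorphisms C] (X : C) : Prop :=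
  ¬ IsZero X ∧ ∀ e : X ⟶ X, e ≫ e = e → e = 0 ∨ e = 𝟙 X

/-- A morphism is *irreducible* if it is neither a split monomorphism nor a split
epimorphism, and in any factorization one of the two factors is split. -/
def IsIrreducibleHom {X Y : C} (f : X ⟶ Y) : Prop :=
  ¬ IsSplitMono f ∧ ¬ IsSplitEpi f ∧
    ∀ ⦃Z : C⦄ (g : X ⟶ Z) (h : Z ⟶ Y), g ≫ h = f → IsSplitMono g ∨ IsSplitEpi h

/-- The property of being a (possibly empty) finite composite of irreducible morphisms. -/
inductive IrrPath : ∀ {X Y : C}, (X ⟶ Y) → Prop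
  | id (X : C) : IrrPath (𝟙 X)
  | comp {X Y Z : C} {f : X ⟶ Y} {g : Y ⟶ Z} :
      IrrPath f → IsIrreducibleHom g → IrrPath (f ≫ g)

/-- `f` is a sum of (finite) composites of irreducible morphisms. -/
def IsSumOfCompositesOfIrreducibles [Preadditive C] {X Y : C} (f : X ⟶ Y) : Prop :=
  f ∈ AddSubgroup.closure {g : X ⟶ Y | IrrPath g}

/-- Two objects lie in the same component of the Auslander-Reiten quiver:  the equivalence
relation generated by isomorphism together with the existence of an irreducible morphism in
either direction. -/
def SameARComponent (X Y : C) : Prop :=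
  Relation.EqvGen
    (fun U V => Nonempty (U ≅ V) ∨ (∃ f : U ⟶ V, IsIrreducibleHom f) ∨
      ∃ f : V ⟶ U, IsIrreducibleHom f) X Y

/-- Finiteness of a collection of objects up to isomorphism. -/
def FinitelyManyIsoClasses (s : Set C) : Prop :=
  ∃ L : List C, ∀ X ∈ s, ∃ Y ∈ L, Nonempty (X ≅ Y)

end BasicDefs

section Triangulated

variable {C : Type u} [Category.{v} C] [Preadditive C] [HasZeroObject C]
  [HasShift C ℤ] [∀ n : ℤ, (shiftFunctor C n).Additive] [Pretriangulated C]

/-- `U ⟶ V ⟶ M ⟶ ΣU` is an Auslander--Reiten triangle:  a non-split distinguished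
triangle with indecomposable end terms such that every morphism to `M` which is
not a split epimorphism lifts through `V ⟶ M`. -/
structure IsARTriangle {U V M : C} (f : U ⟶ V) (g : V ⟶ M) (h : M ⟶ U⟦(1 : ℤ)⟧) : Prop where
  distinguished : Triangle.mk f g h ∈ distTriang C
  indec₁ : Indec U
  indec₃ : Indec M
  nonsplit : h ≠ 0
  lift : ∀ ⦃W : C⦄ (w : W ⟶ M), ¬ IsSplitEpi w → ∃ w' : W ⟶ V, w' ≫ g = w

/-- A morphism `f : X ⟶ Y` between indecomposable objects is *almost vanishing* if it is,
up to an identification of the target, the third morphism of an Auslander--Reiten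
triangle. -/
def AlmostVanishing {X Y : C} (f : X ⟶ Y) : Prop :=
  ∃ (U V : C) (a : U ⟶ V) (b : V ⟶ X) (c : X ⟶ U⟦(1 : ℤ)⟧) (e : (U⟦(1 : ℤ)⟧ : C) ≅ Y),
    IsARTriangle a b c ∧ c ≫ e.hom = f

end Triangulated

section Serre

variable (k : Type u) [Field k]
variable {C : Type u} [Category.{v} C] [Preadditive C] [Linear k C]

/-- The data exhibiting `S` as a Serre functor: an inverse (so `S` is a self-equivalence)
together with a bifunctorial nondegenerate pairing realizing
`D Hom(X, Y) ≅ Hom(Y, S X)`. -/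
structure SerreStructure (S : C ⥤ C) where
  /-- an inverse functor for `S` -/
  inv : C ⥤ C
  invS : S ⋙ inv ≅ 𝟭 C
  Sinv : inv ⋙ S ≅ 𝟭 C
  /-- the trace pairing `Hom(X,Y) ⊗ Hom(Y, S X) → k` -/
  pairing : ∀ (X Y : C), (X ⟶ Y) →ₗ[k] (Y ⟶ S.obj X) →ₗ[k] k
  natX : ∀ {X X' Y : C} (b : X' ⟶ X) (f : X ⟶ Y) (g : Y ⟶ S.obj X'),
    pairing X Y f (g ≫ S.map b) = pairing X' Y (b ≫ f) g
  natY : ∀ {X Y Y' : C} (a : Y ⟶ Y') (f : X ⟶ Y) (g : Y' ⟶ S.obj X),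
    pairing X Y f (a ≫ g) = pairing X Y' (f ≫ a) g
  nondegen : ∀ (X Y : C),
    Function.Bijective (fun g : Y ⟶ S.obj X => (pairing X Y).flip g)

end Serre





section FunCat

variable (k : Type u) [Field k]
variable (C : Type u) [Category.{v} C] [Preadditive C] [Linear k C]

def IsLinearFunctor (F : Cᵒᵖ ⥤ ModuleCat.{v} k) : Prop :=
  (∀ ⦃X Y : C⦄ (f g : Y ⟶ X), F.map (f + g).op = F.map f.op + F.map g.op) ∧
  (∀ ⦃X Y : C⦄ (c : k) (f : Y ⟶ X), F.map (c • f).op = c • F.map f.op)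

abbrev FunCat := ObjectProperty.FullSubcategory (IsLinearFunctor k C)

variable {C}

def yon (M : C) : FunCat k C :=
  ⟨(linearYoneda k C).obj M, by
    constructor
    · intro X Y f g
      ext h
      exact Preadditive.add_comp _ _ _ f g h
    · intro X Y c f
      ext h
      exact CategoryTheory.Linear.smul_comp _ _ _ c f h⟩

def yonMap {M N : C} (f : M ⟶ N) : yon k M ⟶ yon k N :=
  ⟨(linearYoneda k C).map f⟩

/-- The value at `X` of the radical subfunctor of `Hom_C(-, M)`: the subspace spanned by
the morphisms `X.unop ⟶ M` that are not split epimorphisms (for `X.unop` indecomposable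
in a Krull-Schmidt category these are exactly the non-isomorphisms `X.unop ⟶ M`). -/
def radSub (M : C) (X : Cᵒᵖ) : Submodule k (X.unop ⟶ M) :=
  Submodule.span k {f : X.unop ⟶ M | ¬ IsSplitEpi f}

lemma radSub_le_comap (M : C) {X Y : Cᵒᵖ} (u : X ⟶ Y) :
    radSub k M X ≤ (radSub k M Y).comap (Linear.leftComp k M u.unop) := by
  rw [radSub, Submodule.span_le]
  intro f hf
  simp only [Set.mem_setOf_eq] at hf
  refine Submodule.subset_span ?_
  simp only [Set.mem_setOf_eq, Linear.leftComp_apply]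
  intro hse
  rcases hse.exists_splitEpi with ⟨⟨s, hs⟩⟩
  refine hf ⟨⟨⟨s ≫ u.unop, ?_⟩⟩⟩
  rw [Category.assoc]
  exact hs

/-- The simple functor `s^M = Hom_C(-,M)/Rad_C(-,M)`. -/
def sFun (M : C) : FunCat k C :=
  ⟨{ obj := fun X => ModuleCat.of k ((X.unop ⟶ M) ⧸ radSub k M X)
     map := fun {X Y} u =>
       ModuleCat.ofHom (Submodule.mapQ _ _ (Linear.leftComp k M u.unop)
        (radSub_le_comap k M u))
     map_id := by
       intro X
       ext f
       exact congrArg Submodule.Quotient.mk (Category.id_comp f)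
     map_comp := by
       intro X Y Z u v
       ext f
       exact congrArg Submodule.Quotient.mk (Category.assoc _ _ f) },
   by
    constructor
    · intro X Y f g
      ext h
      exact congrArg Submodule.Quotient.mk (Preadditive.add_comp _ _ _ f g h)
    · intro X Y c f
      ext h
      exact congrArg Submodule.Quotient.mk
        (CategoryTheory.Linear.smul_comp _ _ _ c f h)⟩

/-- The canonical quotient map `Hom_C(-,M) ⟶ s^M`. -/
def sQuot (M : C) : yon k M ⟶ sFun k M where
  hom.app X := ModuleCat.ofHom (radSub k M X).mkQ
  hom.naturality := by
    intro X Y u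
    ext f
    rfl

end FunCat


section FunCatProps

variable (k : Type u) [Field k]
variable (C : Type u) [Category.{v} C] [Preadditive C] [Linear k C]

/-- A functor is finitely generated if it is an epimorphic image of a representable. -/
def FinitelyGenerated (F : FunCat k C) : Prop :=
  ∃ (M : C) (p : yon k M ⟶ F), Epi p

/-- A functor `F` is finitely presented if there is an exact sequence
`Hom(-,M₁) ⟶ Hom(-,M₀) ⟶ F ⟶ 0`. -/
def FinitelyPresented (F : FunCat k C) : Prop :=
  ∃ (M₁ M₀ : C) (a : yon k M₁ ⟶ yon k M₀) (p : yon k M₀ ⟶ F) (w : a ≫ p = 0),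
    Nonempty (IsColimit (CokernelCofork.ofπ p w))

/-- `S` is (isomorphic to) a subquotient of `F`:  there are subfunctors `G₀ ⊆ G₁ ⊆ F`
with `G₁/G₀ ≅ S`. -/
def IsCompositionFactorOf (S F : FunCat k C) : Prop :=
  ∃ (G₀ G₁ : FunCat k C) (ι : G₀ ⟶ G₁) (j : G₁ ⟶ F) (π : G₁ ⟶ S) (w : ι ≫ π = 0),
    Mono ι ∧ Mono j ∧ Nonempty (IsColimit (CokernelCofork.ofπ π w))

/-- `F` has a finite composition series `0 = G₀ ⊆ G₁ ⊆ ⋯ ⊆ Gₙ = F` with simple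
subquotients. -/
def HasFiniteLength (F : FunCat k C) : Prop :=
  ∃ (n : ℕ) (G : Fin (n + 1) → FunCat k C),
    IsZero (G 0) ∧ Nonempty (G (Fin.last n) ≅ F) ∧
    ∀ i : Fin n, ∃ (ι : G i.castSucc ⟶ G i.succ) (S : FunCat k C) (π : G i.succ ⟶ S)
      (w : ι ≫ π = 0), Mono ι ∧ Simple S ∧ Nonempty (IsColimit (CokernelCofork.ofπ π w))

/-- `0 ⟶ A ⟶ B ⟶ D ⟶ 0` is a short exact sequence: `i` is a kernel of `p` and `p` is a
cokernel of `i`. -/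
def IsShortExact {A B D : FunCat k C} (i : A ⟶ B) (p : B ⟶ D) (w : i ≫ p = 0) : Prop :=
  Nonempty (IsLimit (KernelFork.ofι i w)) ∧ Nonempty (IsColimit (CokernelCofork.ofπ p w))

/-- `F` has a finite projective resolution, expressed by a finite chain of syzygies. -/
def FiniteProjectiveDimension (F : FunCat k C) : Prop :=
  ∃ (m : ℕ) (P : Fin (m + 1) → FunCat k C) (K : Fin (m + 2) → FunCat k C),
    (∀ i, Projective (P i)) ∧ Nonempty (K 0 ≅ F) ∧ IsZero (K (Fin.last (m + 1))) ∧
    ∀ i : Fin (m + 1), ∃ (a : K i.succ ⟶ P i) (b : P i ⟶ K i.castSucc) (w : a ≫ b = 0),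
      IsShortExact k C a b w

/-- `p : P ⟶ F` is a projective cover: `P` is projective, `p` is epi, and `p` is
essential. -/
def IsProjectiveCover {P F : FunCat k C} (p : P ⟶ F) : Prop :=
  Projective P ∧ Epi p ∧ ∀ ⦃G : FunCat k C⦄ (g : G ⟶ P), Epi (g ≫ p) → Epi g

end FunCatProps

section KS

/-- A Krull--Schmidt category: every object is a finite biproduct of indecomposable
objects, and indecomposable objects have local endomorphism rings. -/
def IsKrullSchmidt (C : Type u) [Category.{v} C] [Preadditive C]
    [HasFiniteBiproducts C] : Prop :=
  (∀ X : C, ∃ (n : ℕ) (f : Fin n → C), Nonempty (X ≅ ⨁ f) ∧ ∀ i, Indec (f i)) ∧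
  (∀ X : C, Indec X → IsLocalRing (End X))

end KS

section TreeClass

variable {C : Type u} [Category.{v} C] [Preadditive C] [HasZeroObject C]
  [HasShift C ℤ] [∀ n : ℤ, (shiftFunctor C n).Additive] [Pretriangulated C]
  [HasBinaryBiproducts C]

/-- The Auslander--Reiten quiver component of `N` has tree class `A_∞`:  it is covered by
a `ℤA_∞`-shaped family, with `M i 0` on the rim, Auslander--Reiten translate
`τ (M i j) = M (i-1) j`, and meshes of the standard shape. -/
def ComponentTreeClassAInfinity (N : C) : Prop :=
  ∃ M : ℤ → ℕ → C,
    (∀ (i : ℤ) (j : ℕ), Indec (M i j) ∧ SameARComponent (M i j) N) ∧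
    (∀ U : C, Indec U → SameARComponent U N → ∃ (i : ℤ) (j : ℕ), Nonempty (U ≅ M i j)) ∧
    (∀ i : ℤ, ∃ (a : M (i - 1) 0 ⟶ M (i - 1) 1) (b : M (i - 1) 1 ⟶ M i 0)
      (c : M i 0 ⟶ ((M (i - 1) 0)⟦(1 : ℤ)⟧ : C)), IsARTriangle a b c) ∧
    (∀ (i : ℤ) (j : ℕ), ∃ (a : M (i - 1) (j + 1) ⟶ (M (i - 1) (j + 2) ⊞ M i j))
      (b : (M (i - 1) (j + 2) ⊞ M i j) ⟶ M i (j + 1))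
      (c : M i (j + 1) ⟶ ((M (i - 1) (j + 1))⟦(1 : ℤ)⟧ : C)), IsARTriangle a b c)

end TreeClass

section LocalEnd

variable {k : Type u} [Field k] {C : Type u} [Category.{v} C] [Preadditive C] [Linear k C]

lemma isSplitEpi_of_isUnit_mul {U : C} {a s : End U} (h : IsUnit (a * s)) :
    IsSplitEpi (a : U ⟶ U) := by
  obtain ⟨t, ht⟩ : ∃ t : End U, a * t = 1 := ⟨s * ↑h.unit⁻¹, by rw [← mul_assoc, h.mul_val_inv]⟩
  exact ⟨⟨t, ht⟩⟩

lemma not_isSplitEpi_of_mem_radSub {U : C} [IsLocalRing (End U)] {g : U ⟶ U}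
    (hg : g ∈ radSub k U (op U)) : ¬ IsSplitEpi g := by
  induction hg using Submodule.span_induction with
  | mem g hg => exact hg
  | zero =>
    rintro ⟨⟨s, hs⟩⟩
    exact one_ne_zero (α := End U) (hs.symm.trans comp_zero)
  | add a b _ _ ha hb =>
    rintro ⟨⟨s, hs⟩⟩
    have hsum : (show End U from a) * (show End U from s) +
        (show End U from b) * (show End U from s) = 1 := by
      rw [← add_mul]; exact hs
    rcases IsLocalRing.isUnit_or_isUnit_of_add_one hsum with h | h
    · exact ha (isSplitEpi_of_isUnit_mul h)
    · exact hb (isSplitEpi_of_isUnit_mul h)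
  | smul c g _ hg =>
    rintro ⟨⟨s, hs⟩⟩
    exact hg ⟨⟨c • s, by rw [Linear.smul_comp, ← Linear.comp_smul]; exact hs⟩⟩

lemma id_notMem_radSub {U : C} [IsLocalRing (End U)] : 𝟙 U ∉ radSub k U (op U) :=
  fun h => not_isSplitEpi_of_mem_radSub h inferInstance

end LocalEnd

namespace FunCat

variable {k : Type u} [Field k] {C : Type u} [Category.{v} C] [Preadditive C] [Linear k C]

lemma hom_ext {F G : FunCat k C} {α β : F ⟶ G}
    (h : ∀ X x, α.hom.app X x = β.hom.app X x) : α = β :=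
  InducedCategory.hom_ext (NatTrans.ext (funext fun X => ModuleCat.hom_ext (LinearMap.ext (h X))))

lemma congr_app_apply {F G : FunCat k C} {α β : F ⟶ G} (h : α = β) (X : Cᵒᵖ)
    (x : F.obj.obj X) : α.hom.app X x = β.hom.app X x := by
  rw [h]

lemma zero_app {F G : FunCat k C} (X : Cᵒᵖ) (x : F.obj.obj X) :
    (0 : F ⟶ G).hom.app X x = 0 := rfl

lemma mono_of_injective {F G : FunCat k C} (α : F ⟶ G)
    (h : ∀ X, Function.Injective (α.hom.app X)) : Mono α :=
  ⟨fun a b hab => hom_ext fun X x => h X (by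
    simpa using congrArg (fun γ : _ ⟶ G => γ.hom.app X x) hab)⟩

def homOfElt {G : FunCat k C} {X : C} (x : G.obj.obj (op X)) : yon k X ⟶ G where
  hom.app Y := ModuleCat.ofHom
    { toFun := fun g => G.obj.map g.op x
      map_add' := fun g g' => by
        change G.obj.map (g + g').op x = _
        rw [G.property.1]; rfl
      map_smul' := fun c g => by
        change G.obj.map (c • g).op x = _
        rw [G.property.2]; rfl }
  hom.naturality Y Z u := by
    ext g
    exact ConcreteCategory.congr_hom (G.obj.map_comp g.op u) x

lemma homOfElt_app_id {G : FunCat k C} {X : C} (x : G.obj.obj (op X)) :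
    (homOfElt x).hom.app (op X) (show (yon k X).obj.obj (op X) from 𝟙 X) = x := by
  change G.obj.map (𝟙 (op X)) x = x
  simp

lemma homOfElt_comp {F G : FunCat k C} {X : C} (x : F.obj.obj (op X)) (α : F ⟶ G) :
    homOfElt x ≫ α = homOfElt (α.hom.app (op X) x) :=
  hom_ext fun Y g => by
    change α.hom.app Y (F.obj.map g.op x) = G.obj.map g.op (α.hom.app (op X) x)
    exact NatTrans.naturality_apply α.hom g.op x

lemma injective_app_of_mono {F G : FunCat k C} (α : F ⟶ G) [Mono α] (X : Cᵒᵖ) :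
    Function.Injective (α.hom.app X) := fun x y hxy => by
  have h : homOfElt (X := X.unop) x = homOfElt y :=
    (cancel_mono α).mp (by rw [homOfElt_comp, homOfElt_comp, hxy])
  exact (homOfElt_app_id x).symm.trans
    ((ConcreteCategory.congr_hom (congrArg (fun β => β.hom.app X) h) _).trans
      (homOfElt_app_id y))

section Subfunctor

variable (F : FunCat k C) (p : ∀ X, Submodule k (F.obj.obj X))
  (hp : ∀ ⦃X Y : Cᵒᵖ⦄ (u : X ⟶ Y), p X ≤ (p Y).comap (F.obj.map u).hom)

def subfunctor : FunCat k C :=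
  ⟨{ obj X := ModuleCat.of k (p X)
     map u := ModuleCat.ofHom ((F.obj.map u).hom.restrict (hp u))
     map_id X := by ext x; exact congrArg (fun f => f x.1) (F.obj.map_id X)
     map_comp u v := by ext x; exact congrArg (fun f => f x.1) (F.obj.map_comp u v) },
   ⟨fun _ _ f g => by ext x; exact congrArg (fun φ => φ x.1) (F.property.1 f g),
    fun _ _ c f => by ext x; exact congrArg (fun φ => φ x.1) (F.property.2 c f)⟩⟩

def subfunctorι : subfunctor F p hp ⟶ F where
  hom.app X := ModuleCat.ofHom (p X).subtype
  hom.naturality _ _ _ := rfl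

instance : Mono (subfunctorι F p hp) :=
  mono_of_injective _ fun X => (p X).injective_subtype

variable {F p hp} in
def subfunctorInclusion {q : ∀ X, Submodule k (F.obj.obj X)}
    (hq : ∀ ⦃X Y : Cᵒᵖ⦄ (u : X ⟶ Y), q X ≤ (q Y).comap (F.obj.map u).hom) (hpq : ∀ X, p X ≤ q X) :
    subfunctor F p hp ⟶ subfunctor F q hq where
  hom.app X := ModuleCat.ofHom (Submodule.inclusion (hpq X))
  hom.naturality _ _ _ := rfl

end Subfunctor

section Image

variable {F G : FunCat k C} (α : F ⟶ G)

abbrev image : FunCat k C :=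
  subfunctor G (fun X => LinearMap.range (α.hom.app X).hom) fun _ _ u _ ⟨x, hx⟩ =>
    ⟨F.obj.map u x, by rw [← hx]; exact NatTrans.naturality_apply α.hom u x⟩

def toImage : F ⟶ image α where
  hom.app X := ModuleCat.ofHom (α.hom.app X).hom.rangeRestrict
  hom.naturality _ _ u := by ext x; exact Subtype.ext (NatTrans.naturality_apply α.hom u x)

lemma toImage_app_surjective (X : Cᵒᵖ) : Function.Surjective ((toImage α).hom.app X) :=
  (α.hom.app X).hom.surjective_rangeRestrict

def imageCompInclusion {E : FunCat k C} (β : E ⟶ F) : image (β ≫ α) ⟶ image α :=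
  subfunctorInclusion _ fun X => LinearMap.range_comp_le_range (β.hom.app X).hom (α.hom.app X).hom

instance {E : FunCat k C} (β : E ⟶ F) : Mono (imageCompInclusion α β) :=
  mono_of_injective _ fun X =>
    Submodule.inclusion_injective (LinearMap.range_comp_le_range (β.hom.app X).hom _)

end Image

section Desc

variable {F G H : FunCat k C} (ψ : F ⟶ G) (hψ : ∀ X, Function.Surjective (ψ.hom.app X))
  (θ : F ⟶ H) (hθ : ∀ X, LinearMap.ker (ψ.hom.app X).hom ≤ LinearMap.ker (θ.hom.app X).hom)

noncomputable def descOfSurjectiveApp (X : Cᵒᵖ) : G.obj.obj X →ₗ[k] H.obj.obj X :=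
  (LinearMap.ker (ψ.hom.app X).hom).liftQ (θ.hom.app X).hom (hθ X) ∘ₗ
    ((ψ.hom.app X).hom.quotKerEquivOfSurjective (hψ X)).symm.toLinearMap

lemma descOfSurjectiveApp_apply (X : Cᵒᵖ) (x : F.obj.obj X) :
    descOfSurjectiveApp ψ hψ θ hθ X (ψ.hom.app X x) = θ.hom.app X x := by
  simp [descOfSurjectiveApp]

noncomputable def descOfSurjective : G ⟶ H where
  hom.app X := ModuleCat.ofHom (descOfSurjectiveApp ψ hψ θ hθ X)
  hom.naturality X Y u := by
    ext y
    obtain ⟨x, rfl⟩ := hψ X y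
    change descOfSurjectiveApp ψ hψ θ hθ Y (G.obj.map u (ψ.hom.app X x)) =
      H.obj.map u (descOfSurjectiveApp ψ hψ θ hθ X (ψ.hom.app X x))
    rw [← NatTrans.naturality_apply, descOfSurjectiveApp_apply, descOfSurjectiveApp_apply,
      NatTrans.naturality_apply]

lemma comp_descOfSurjective : ψ ≫ descOfSurjective ψ hψ θ hθ = θ :=
  hom_ext fun X x => descOfSurjectiveApp_apply ψ hψ θ hθ X x

end Desc

lemma hom_ext_of_surjective {F G H : FunCat k C} (ψ : F ⟶ G)
    (hψ : ∀ X, Function.Surjective (ψ.hom.app X)) {β γ : G ⟶ H} (h : ψ ≫ β = ψ ≫ γ) :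
    β = γ :=
  hom_ext fun X y => by
    obtain ⟨x, rfl⟩ := hψ X y
    exact congr_app_apply h X x

noncomputable def isColimitCokernelCoforkOfSurjective {A B Q : FunCat k C} {ι : A ⟶ B}
    {π : B ⟶ Q} (w : ι ≫ π = 0) (hπ : ∀ X, Function.Surjective (π.hom.app X))
    (hker : ∀ X, LinearMap.ker (π.hom.app X).hom ≤ LinearMap.range (ι.hom.app X).hom) :
    IsColimit (CokernelCofork.ofπ π w) :=
  have hdesc (s : CokernelCofork ι) (X : Cᵒᵖ) :
      LinearMap.ker (π.hom.app X).hom ≤ LinearMap.ker (s.π.hom.app X).hom := fun _ hy => by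
    obtain ⟨a, rfl⟩ := hker X hy
    exact congr_app_apply (CokernelCofork.condition s) X a
  Cofork.IsColimit.mk _ (fun s => descOfSurjective π hπ s.π (hdesc s))
    (fun s => comp_descOfSurjective π hπ s.π (hdesc s))
    (fun s _ hm => hom_ext_of_surjective π hπ (hm.trans (comp_descOfSurjective ..).symm))

end FunCat

section CompositionFactor

variable {k : Type u} [Field k] {C : Type u} [Category.{v} C] [Preadditive C] [Linear k C]

lemma mk_id_ne_zero_of_isLocalRing {U : C} [IsLocalRing (End U)] :
    (Submodule.Quotient.mk (𝟙 U) : (U ⟶ U) ⧸ radSub k U (op U)) ≠ 0 :=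
  (Submodule.Quotient.mk_eq_zero _).not.mpr id_notMem_radSub

/-- A split epimorphism `g : X ⟶ U` with `π x = [g]` would give, through its section `s`,
`π (s^* x) = [𝟙 U] ≠ 0` with `s^* x ∈ G(U) = 0`. -/
lemma eq_zero_of_hom_sFun {U : C} [IsLocalRing (End U)] {G : FunCat k C} (π : G ⟶ sFun k U)
    (hG : ∀ x : G.obj.obj (op U), x = 0) : π = 0 :=
  FunCat.hom_ext fun X x => by
    obtain ⟨g, hg⟩ := Submodule.Quotient.mk_surjective _ (π.hom.app X x)
    rw [FunCat.zero_app, ← hg]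
    refine (Submodule.Quotient.mk_eq_zero _).mpr (Submodule.subset_span fun ⟨⟨s, hs⟩⟩ =>
      mk_id_ne_zero_of_isLocalRing (k := k) (U := U) ?_)
    have hnat := NatTrans.naturality_apply π.hom s.op x
    rw [hG (G.obj.map s.op x), map_zero, ← hg] at hnat
    rw [← hs]
    exact hnat.symm

lemma exists_ne_zero_of_isCompositionFactorOf {U M : C} [IsLocalRing (End U)]
    (h : IsCompositionFactorOf k C (sFun k U) (yon k M)) : ∃ f : U ⟶ M, f ≠ 0 := by
  by_contra! hzero
  obtain ⟨G₀, G₁, ι, j, π, w, -, hj, ⟨hπ⟩⟩ := h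
  have hG₁ (x : G₁.obj.obj (op U)) : x = 0 :=
    FunCat.injective_app_of_mono j _ ((hzero _).trans (map_zero _).symm)
  have hid : 𝟙 (sFun k U) = 0 :=
    Cofork.IsColimit.hom_ext hπ (by
      change π ≫ _ = π ≫ _
      rw [eq_zero_of_hom_sFun π hG₁, zero_comp, zero_comp])
  exact mk_id_ne_zero_of_isLocalRing (FunCat.congr_app_apply hid (op U) _)

lemma mem_radSub_of_comp_eq_zero {U M : C} {f : U ⟶ M} (hf : f ≠ 0) {X : Cᵒᵖ}
    {g : X.unop ⟶ U} (hg : g ≫ f = 0) : g ∈ radSub k U X :=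
  Submodule.subset_span fun _ => hf (by rw [← cancel_epi g, hg, comp_zero])

lemma isCompositionFactorOf_of_ne_zero {U M : C} {f : U ⟶ M} (hf : f ≠ 0) :
    IsCompositionFactorOf k C (sFun k U) (yon k M) := by
  let ψ := FunCat.toImage (yonMap k f)
  have hψ := FunCat.toImage_app_surjective (yonMap k f)
  have hker (X : Cᵒᵖ) :
      LinearMap.ker (ψ.hom.app X).hom ≤ LinearMap.ker ((sQuot k U).hom.app X).hom := fun _ hg =>
    (Submodule.Quotient.mk_eq_zero _).mpr (mem_radSub_of_comp_eq_zero hf (congrArg Subtype.val hg))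
  let π := FunCat.descOfSurjective ψ hψ (sQuot k U) hker
  have hπ (X : Cᵒᵖ) (g : X.unop ⟶ U) :
      π.hom.app X (ψ.hom.app X g) = Submodule.Quotient.mk g :=
    FunCat.descOfSurjectiveApp_apply ψ hψ _ hker X g
  let ι := FunCat.imageCompInclusion (yonMap k f)
    (FunCat.subfunctorι (yon k U) (radSub k U) fun _ _ u => radSub_le_comap k U u)
  have hw : ι ≫ π = 0 := FunCat.hom_ext fun X ⟨_, ⟨g, hg⟩, hgf⟩ => by
    subst hgf
    exact (hπ X g).trans ((Submodule.Quotient.mk_eq_zero _).mpr hg)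
  refine ⟨_, _, ι, FunCat.subfunctorι _ _ _, π, hw, inferInstance, inferInstance,
    ⟨FunCat.isColimitCokernelCoforkOfSurjective hw (fun X y => ?_) (fun X y hy => ?_)⟩⟩
  · obtain ⟨g, rfl⟩ := Submodule.Quotient.mk_surjective _ y
    exact ⟨ψ.hom.app X g, hπ X g⟩
  · obtain ⟨g, rfl⟩ := hψ X y
    have hg : g ∈ radSub k U X := (Submodule.Quotient.mk_eq_zero _).mp ((hπ X g).symm.trans hy)
    exact ⟨⟨g ≫ f, ⟨g, hg⟩, rfl⟩, rfl⟩

lemma isCompositionFactorOf_sFun_yon_iff {U : C} [IsLocalRing (End U)] (M : C) :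
    IsCompositionFactorOf k C (sFun k U) (yon k M) ↔ ∃ f : U ⟶ M, f ≠ 0 :=
  ⟨exists_ne_zero_of_isCompositionFactorOf, fun ⟨_, hf⟩ => isCompositionFactorOf_of_ne_zero hf⟩

end CompositionFactor

section Indec

variable {C : Type u} [Category.{v} C] [HasZeroMorphisms C]

lemma Indec.of_iso {X Y : C} (e : X ≅ Y) (hX : Indec X) : Indec Y := by
  refine ⟨fun hY => hX.1 (hY.of_iso e), fun f hf => ?_⟩
  have hidem : (e.hom ≫ f ≫ e.inv) ≫ (e.hom ≫ f ≫ e.inv) = e.hom ≫ f ≫ e.inv := by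
    simp [reassoc_of% hf]
  rcases hX.2 _ hidem with h | h
  · left
    simpa using congrArg (fun g => e.inv ≫ g ≫ e.hom) h
  · right
    simpa using congrArg (fun g => e.inv ≫ g ≫ e.hom) h

lemma Indec.of_map {D : Type u} [Category.{v} D] [HasZeroMorphisms D] (F : C ⥤ D) [F.Full]
    [F.Faithful] [F.PreservesZeroMorphisms] {X : C} (h : Indec (F.obj X)) : Indec X := by
  refine ⟨fun hX => h.1 (F.map_isZero hX), fun e he => ?_⟩
  rcases h.2 (F.map e) (by rw [← F.map_comp, he]) with h0 | h1
  · exact Or.inl (F.map_injective (h0.trans (F.map_zero _ _).symm))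
  · exact Or.inr (F.map_injective (h1.trans (F.map_id X).symm))

end Indec

namespace SerreStructure

variable {k : Type u} [Field k] {C : Type u} [Category.{v} C] [Preadditive C] [Linear k C]
  {S : C ⥤ C}

lemma nontrivial_hom_iff (SS : SerreStructure k S) (X Y : C) :
    Nontrivial (X ⟶ Y) ↔ Nontrivial (Y ⟶ S.obj X) :=
  (Module.nontrivial_dual_iff k).symm.trans
    (LinearEquiv.ofBijective _ (SS.nondegen X Y)).toEquiv.nontrivial_congr.symm

lemma exists_ne_zero_inv_obj_iff (SS : SerreStructure k S) (U M : C) :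
    (∃ g : SS.inv.obj M ⟶ U, g ≠ 0) ↔ ∃ f : U ⟶ M, f ≠ 0 := by
  simp only [← nontrivial_iff_exists_ne]
  exact (SS.nontrivial_hom_iff _ _).trans ((Iso.refl U).homCongr (SS.Sinv.app M)).nontrivial_congr

lemma indec_inv_obj (SS : SerreStructure k S) {M : C} (hM : Indec M) : Indec (SS.inv.obj M) :=
  have : S.IsEquivalence :=
    (CategoryTheory.Equivalence.mk S SS.inv SS.invS.symm SS.Sinv).isEquivalence_functor
  Indec.of_map S (hM.of_iso (SS.Sinv.app M).symm)

end SerreStructure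

/-- For indecomposable `U`, `M` in a category with Serre functor `S`, the
following are equivalent: `s^U` is a composition factor of `Hom_C(-,M)`; there is a nonzero
morphism `U ⟶ M`; there is a nonzero morphism `S⁻¹M ⟶ U`; `s^{S⁻¹M}` is a composition
factor of `Hom_C(-,U)`. -/
theorem statement_7 (k : Type u) [Field k] [IsAlgClosed k]
    (C : Type u) [Category.{v} C] [Preadditive C] [CategoryTheory.Linear k C]
    [HasZeroObject C] [HasShift C ℤ] [∀ n : ℤ, (shiftFunctor C n).Additive]
    [Pretriangulated C] [HasFiniteBiproducts C]
    [∀ X Y : C, FiniteDimensional k (X ⟶ Y)]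
    (hKS : IsKrullSchmidt C)
    (S : C ⥤ C) (SS : SerreStructure k S) (U M : C) (hU : Indec U) (hM : Indec M) :
    List.TFAE [
      IsCompositionFactorOf k C (sFun k U) (yon k M),
      ∃ f : U ⟶ M, f ≠ 0,
      ∃ g : SS.inv.obj M ⟶ U, g ≠ 0,
      IsCompositionFactorOf k C (sFun k (SS.inv.obj M)) (yon k U)] := by
  have := hKS.2 U hU
  have := hKS.2 _ (SS.indec_inv_obj hM)
  tfae_have 1 ↔ 2 := isCompositionFactorOf_sFun_yon_iff M
  tfae_have 2 ↔ 3 := (SS.exists_ne_zero_inv_obj_iff U M).symm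
  tfae_have 3 ↔ 4 := (isCompositionFactorOf_sFun_yon_iff U).symm
  tfae_finish

end GradedCenter
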